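/- arXiv:2506.23165 — 4 statements merged into one kernel-verified Lean document; each statement's English description precedes it below -/
import Mathlib

section
/- Under the stated integrability assumptions, h(x) − h(y) − ∫_{S×A} (x(s,a) − y(s,a))·(log y(s,a) − log y_S(s)) d(μ⊗ν) = ∫_{S×A} x(s,a)·log( (x(s,a)/x_S(s)) / (y(s,a)/y_S(s)) ) d(μ⊗ν); that is, the continuous pseudo-KL divergence of occupancy is the Bregman divergence generated by h, whose gradient at y is the function (s,a) ↦ log y(s,a) − log y_S(s). -/
/-!
Expanding all the logarithms, both sides become combinations of the integrals of `x log x`,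
`x log y`, `x log y_S`, `y log y`, `y log y_S` over `S × A` and of `x_S log x_S`, `y_S log y_S`
over `S`. They agree once the two remaining terms `∫ x log x_S` and `∫ y log y_S` are integrated
over `A` first: by Fubini, `∫ x(s,a) log x_S(s) d(μ⊗ν) = ∫ x_S log x_S dμ`, and likewise for `y`.
-/

open MeasureTheory

theorem Real.mul_log_div_div {a b c d : ℝ} (ha : a ≠ 0) (hb : b ≠ 0) (hc : c ≠ 0) (hd : d ≠ 0) :
    a * Real.log ((a / b) / (c / d)) =
      (a * Real.log a - a * Real.log b) - (a * Real.log c - a * Real.log d) := by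
  rw [Real.log_div (div_ne_zero ha hb) (div_ne_zero hc hd), Real.log_div ha hb, Real.log_div hc hd]
  ring

section Marginal

variable {S A : Type*} [MeasurableSpace S] [MeasurableSpace A] {μ : Measure S} {ν : Measure A}
  {f : S × A → ℝ} {fS g : S → ℝ}

theorem integrable_mul_comp_fst [SFinite ν] (hf_nonneg : ∀ z, 0 ≤ f z)
    (hf : AEStronglyMeasurable f (μ.prod ν)) (hg : AEStronglyMeasurable g μ)
    (hfS : ∀ s, fS s = ∫ a, f (s, a) ∂ν) (hf_sec : ∀ s, Integrable (fun a => f (s, a)) ν)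
    (hfg : Integrable (fun s => fS s * g s) μ) :
    Integrable (fun z => f z * g z.1) (μ.prod ν) := by
  rw [integrable_prod_iff (f := fun z => f z * g z.1) (hf.mul hg.comp_fst)]
  refine ⟨.of_forall fun s => (hf_sec s).mul_const (g s), hfg.abs.congr (.of_forall fun s => ?_)⟩
  have hnorm : ∀ a, ‖f (s, a) * g s‖ = f (s, a) * |g s| := fun a => by
    rw [norm_mul, Real.norm_of_nonneg (hf_nonneg _), Real.norm_eq_abs]
  have hfS_nonneg : 0 ≤ fS s := hfS s ▸ integral_nonneg fun a => hf_nonneg (s, a)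
  simp only [hnorm, integral_mul_const, ← hfS, abs_mul, abs_of_nonneg hfS_nonneg]

theorem integral_mul_comp_fst [SFinite μ] [SFinite ν] (hfS : ∀ s, fS s = ∫ a, f (s, a) ∂ν)
    (hfg : Integrable (fun z => f z * g z.1) (μ.prod ν)) :
    ∫ z, f z * g z.1 ∂(μ.prod ν) = ∫ s, fS s * g s ∂μ := by
  simp only [integral_prod _ hfg, integral_mul_const, hfS]

theorem measurable_marginal [SFinite ν] (hf : Measurable f) (hfS : ∀ s, fS s = ∫ a, f (s, a) ∂ν) :
    Measurable fS := by
  simpa only [← funext hfS] using (hf.stronglyMeasurable.integral_prod_right' (ν := ν)).measurable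

end Marginal

/-- The continuous pseudo-KL divergence of occupancy is the Bregman divergence generated by
`h(x) = ∫ x log x d(μ⊗ν) - ∫ x_S log x_S dμ`, whose gradient at `y` is
`(s,a) ↦ log y(s,a) - log y_S(s)`:
`h(x) - h(y) - ∫ (x - y)(log y - log y_S) d(μ⊗ν)
  = ∫ x log((x/x_S)/(y/y_S)) d(μ⊗ν)`. -/
theorem continuous_pseudo_KL_is_bregman
    {S A : Type*} [MeasurableSpace S] [MeasurableSpace A]
    (μ : Measure S) (ν : Measure A) [SigmaFinite μ] [SigmaFinite ν]
    (x y : S × A → ℝ) (hxmeas : Measurable x) (hymeas : Measurable y)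
    (hxpos : ∀ z, 0 < x z) (hypos : ∀ z, 0 < y z)
    (xS yS : S → ℝ)
    (hxS : ∀ s, xS s = ∫ a, x (s, a) ∂ν)
    (hyS : ∀ s, yS s = ∫ a, y (s, a) ∂ν)
    (hxfin : ∀ s, Integrable (fun a => x (s, a)) ν)
    (hyfin : ∀ s, Integrable (fun a => y (s, a)) ν)
    (hxSpos : ∀ s, 0 < xS s) (hySpos : ∀ s, 0 < yS s)
    (h1 : Integrable (fun z => x z * Real.log (x z)) (μ.prod ν))
    (h2 : Integrable (fun z => y z * Real.log (y z)) (μ.prod ν))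
    (h3 : Integrable (fun z => x z * Real.log (y z)) (μ.prod ν))
    (h4 : Integrable (fun z => x z * Real.log (yS z.1)) (μ.prod ν))
    (h5 : Integrable (fun z => y z * Real.log (yS z.1)) (μ.prod ν))
    (h6 : Integrable (fun s => xS s * Real.log (xS s)) μ)
    (h7 : Integrable (fun s => yS s * Real.log (yS s)) μ) :
    ((∫ z, x z * Real.log (x z) ∂(μ.prod ν)) - ∫ s, xS s * Real.log (xS s) ∂μ)
      - ((∫ z, y z * Real.log (y z) ∂(μ.prod ν)) - ∫ s, yS s * Real.log (yS s) ∂μ)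
      - ∫ z, (x z - y z) * (Real.log (y z) - Real.log (yS z.1)) ∂(μ.prod ν)
    = ∫ z, x z * Real.log ((x z / xS z.1) / (y z / yS z.1)) ∂(μ.prod ν) := by
  have hx_log := integrable_mul_comp_fst (fun z => (hxpos z).le) hxmeas.aestronglyMeasurable
    (measurable_marginal hxmeas hxS).log.aestronglyMeasurable hxS hxfin h6
  have hy_log := integrable_mul_comp_fst (fun z => (hypos z).le) hymeas.aestronglyMeasurable
    (measurable_marginal hymeas hyS).log.aestronglyMeasurable hyS hyfin h7
  have hgradient : ∀ z, (x z - y z) * (Real.log (y z) - Real.log (yS z.1)) =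
      (x z * Real.log (y z) - x z * Real.log (yS z.1))
        - (y z * Real.log (y z) - y z * Real.log (yS z.1)) := fun z => by ring
  have hx_rel : Integrable (fun z => x z * Real.log (x z) - x z * Real.log (xS z.1)) (μ.prod ν) :=
    h1.sub hx_log
  have hxy_rel : Integrable (fun z => x z * Real.log (y z) - x z * Real.log (yS z.1)) (μ.prod ν) :=
    h3.sub h4
  have hy_rel : Integrable (fun z => y z * Real.log (y z) - y z * Real.log (yS z.1)) (μ.prod ν) :=
    h2.sub h5
  simp only [hgradient, Real.mul_log_div_div (hxpos _).ne' (hxSpos _).ne' (hypos _).ne'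
    (hySpos _).ne']
  rw [integral_sub hx_rel hxy_rel, integral_sub hxy_rel hy_rel,
    integral_sub h1 hx_log, integral_sub h3 h4, integral_sub h2 h5,
    integral_mul_comp_fst (g := fun s => Real.log (xS s)) hxS hx_log,
    integral_mul_comp_fst (g := fun s => Real.log (yS s)) hyS hy_log]
  ring
end

section
/- First performance difference lemma across transition kernels: for any two transition kernels p and p' and any policy π, V_{π,p}(ρ) − V_{π,p'}(ρ) = (1/(1−γ)) Σ_{s∈S} d_ρ^{π,p'}(s) Σ_{a∈A} π(a|s) Σ_{s'∈S} (p(s'|s,a) − p'(s'|s,a))·(c(s,a,s') + γ·V_{π,p}(s')). -/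
open Finset

variable {S A : Type*}

/-- Expected one-step cost `c_{π,p}(s) = Σ_a π(a|s) Σ_{s'} p(s'|s,a) c(s,a,s')`. -/
noncomputable def cPi [Fintype S] [Fintype A] (π : S → A → ℝ) (p : S → A → S → ℝ)
    (c : S → A → S → ℝ) (s : S) : ℝ :=
  ∑ a, π s a * ∑ s', p s a s' * c s a s'

/-- Induced state-transition matrix `M_{π,p}(s,s') = Σ_a π(a|s) p(s'|s,a)`. -/
noncomputable def matPi [Fintype A] (π : S → A → ℝ) (p : S → A → S → ℝ) :
    Matrix S S ℝ :=
  Matrix.of fun s s' => ∑ a, π s a * p s a s'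

/-- Discounted value function `V_{π,p}(s) = Σ_{l} γ^l ((M_{π,p})^l c_{π,p})(s)`. -/
noncomputable def Vf [Fintype S] [Fintype A] [DecidableEq S] (γ : ℝ) (π : S → A → ℝ)
    (p : S → A → S → ℝ) (c : S → A → S → ℝ) (s : S) : ℝ :=
  ∑' l : ℕ, γ ^ l * ((matPi π p ^ l).mulVec (cPi π p c)) s

/-- Value from an initial distribution, `V_{π,p}(ρ) = Σ_s ρ(s) V_{π,p}(s)`. -/
noncomputable def Vrho [Fintype S] [Fintype A] [DecidableEq S] (γ : ℝ) (ρ : S → ℝ)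
    (π : S → A → ℝ) (p : S → A → S → ℝ) (c : S → A → S → ℝ) : ℝ :=
  ∑ s, ρ s * Vf γ π p c s

/-- Discounted state visitation distribution
`d_ρ^{π,p}(s) = (1-γ) Σ_l γ^l Σ_{s₀} ρ(s₀) ((M_{π,p})^l)(s₀,s)`. -/
noncomputable def dvisit [Fintype S] [Fintype A] [DecidableEq S] (γ : ℝ) (ρ : S → ℝ)
    (π : S → A → ℝ) (p : S → A → S → ℝ) (s : S) : ℝ :=
  (1 - γ) * ∑' l : ℕ, γ ^ l * ∑ s₀, ρ s₀ * (matPi π p ^ l) s₀ s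

/-!
Let `M'` be the transition matrix of `π` under `p'` and `N' = Σ_l (γ M')^l = (1 - γ M')⁻¹`.
Writing `T_q v = c_{π,q} + γ M_{π,q} v` for the Bellman operator of the kernel `q`, the value
`V_{π,p}` is the fixed point of `T_p`, so the inner double sum on the right is
`(T_p - T_{p'}) V_{π,p} = V_{π,p} - T_{p'} V_{π,p}`. For every `v` one has
`N' (v - T_{p'} v) = N' (1 - γ M') v - N' c_{π,p'} = v - V_{π,p'}`, and pairing with `ρ`
moves `N'` onto `ρ`, where `ρᵀ N' = d_ρ^{π,p'} / (1 - γ)`.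
-/

open Matrix

section MatrixHasSum

variable {ι m n R : Type*} [NonUnitalNonAssocSemiring R] [TopologicalSpace R]
  [IsTopologicalSemiring R] {f : ι → Matrix m n R} {A : Matrix m n R}

theorem HasSum.matrix_mulVec [Fintype n] (hf : HasSum f A) (v : n → R) :
    HasSum (fun l => f l *ᵥ v) (A *ᵥ v) :=
  Pi.hasSum.2 fun i =>
    hasSum_sum fun j _ => (Pi.hasSum.1 (Pi.hasSum.1 hf i) j).mul_right (v j)

theorem HasSum.matrix_vecMul [Fintype m] (hf : HasSum f A) (v : m → R) :
    HasSum (fun l => v ᵥ* f l) (v ᵥ* A) :=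
  Pi.hasSum.2 fun j =>
    hasSum_sum fun i _ => (Pi.hasSum.1 (Pi.hasSum.1 hf i) j).mul_left (v i)

end MatrixHasSum

section DiscountedResolvent

variable {n : Type*} [Fintype n] [DecidableEq n]

noncomputable def discountedResolvent (γ : ℝ) (M : Matrix n n ℝ) : Matrix n n ℝ :=
  ∑' l : ℕ, (γ • M) ^ l

theorem summable_smul_pow_of_mem_rowStochastic {γ : ℝ} (hγ0 : 0 ≤ γ) (hγ1 : γ < 1)
    {M : Matrix n n ℝ} (hM : M ∈ rowStochastic ℝ n) :
    Summable fun l : ℕ => (γ • M) ^ l := by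
  refine Pi.summable.2 fun i => Pi.summable.2 fun j => ?_
  simp only [smul_pow, Matrix.smul_apply, smul_eq_mul]
  refine (summable_geometric_of_lt_one hγ0 hγ1).of_nonneg_of_le (fun l => ?_) (fun l => ?_)
  · exact mul_nonneg (pow_nonneg hγ0 l) (nonneg_of_mem_rowStochastic (pow_mem hM l))
  · exact mul_le_of_le_one_right (pow_nonneg hγ0 l) (le_one_of_mem_rowStochastic (pow_mem hM l))

end DiscountedResolvent

section MDP

variable [Fintype S] [Fintype A]

noncomputable def bellmanOp (γ : ℝ) (π : S → A → ℝ) (p : S → A → S → ℝ) (c : S → A → S → ℝ)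
    (v : S → ℝ) : S → ℝ :=
  fun s => ∑ a, π s a * ∑ s', p s a s' * (c s a s' + γ * v s')

theorem bellmanOp_eq (γ : ℝ) (π : S → A → ℝ) (p : S → A → S → ℝ) (c : S → A → S → ℝ)
    (v : S → ℝ) : bellmanOp γ π p c v = cPi π p c + (γ • matPi π p) *ᵥ v := by
  funext s
  simp only [bellmanOp, cPi, matPi, Pi.add_apply, smul_mulVec, Pi.smul_apply, mulVec, dotProduct,
    of_apply, smul_eq_mul, mul_add, sum_add_distrib, add_right_inj, sum_mul, mul_sum]
  rw [sum_comm]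
  exact sum_congr rfl fun a _ => sum_congr rfl fun s' _ => by ring

variable [DecidableEq S]

theorem matPi_mem_rowStochastic {π : S → A → ℝ} (hπ0 : ∀ s a, 0 ≤ π s a)
    (hπ1 : ∀ s, ∑ a, π s a = 1) {p : S → A → S → ℝ} (hp0 : ∀ s a s', 0 ≤ p s a s')
    (hp1 : ∀ s a, ∑ s', p s a s' = 1) : matPi π p ∈ rowStochastic ℝ S := by
  refine mem_rowStochastic_iff_sum.2 ⟨fun s s' => ?_, fun s => ?_⟩
  · exact sum_nonneg fun a _ => mul_nonneg (hπ0 s a) (hp0 s a s')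
  · simp only [matPi, of_apply]
    rw [sum_comm]
    simp only [← mul_sum, hp1, mul_one, hπ1]

variable {γ : ℝ} {π : S → A → ℝ} {p : S → A → S → ℝ}

theorem Vf_eq_discountedResolvent_mulVec (h : Summable fun l : ℕ => (γ • matPi π p) ^ l)
    (c : S → A → S → ℝ) : Vf γ π p c = discountedResolvent γ (matPi π p) *ᵥ cPi π p c := by
  funext s
  refine ((Pi.hasSum.1 (h.hasSum.matrix_mulVec (cPi π p c)) s).tsum_eq.symm.trans ?_).symm
  simp only [smul_pow, smul_mulVec, Pi.smul_apply, smul_eq_mul]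
  rfl

theorem dvisit_eq_vecMul_discountedResolvent (h : Summable fun l : ℕ => (γ • matPi π p) ^ l)
    (ρ : S → ℝ) : dvisit γ ρ π p = (1 - γ) • (ρ ᵥ* discountedResolvent γ (matPi π p)) := by
  funext s
  rw [Pi.smul_apply, discountedResolvent, ← (Pi.hasSum.1 (h.hasSum.matrix_vecMul ρ) s).tsum_eq]
  simp only [smul_pow, vecMul_smul, Pi.smul_apply, smul_eq_mul]
  rfl

theorem bellmanOp_Vf (h : Summable fun l : ℕ => (γ • matPi π p) ^ l) (c : S → A → S → ℝ) :
    bellmanOp γ π p c (Vf γ π p c) = Vf γ π p c := by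
  have hfix : ((1 - γ • matPi π p) * discountedResolvent γ (matPi π p)) *ᵥ cPi π p c
      = cPi π p c := by
    rw [discountedResolvent, h.one_sub_mul_tsum_pow, one_mulVec]
  rw [sub_mul, one_mul, sub_mulVec, ← mulVec_mulVec] at hfix
  rw [bellmanOp_eq, Vf_eq_discountedResolvent_mulVec h]
  exact eq_sub_iff_add_eq.1 hfix.symm

theorem sub_Vf_eq_discountedResolvent_mulVec (h : Summable fun l : ℕ => (γ • matPi π p) ^ l)
    (c : S → A → S → ℝ) (v : S → ℝ) :
    v - Vf γ π p c = discountedResolvent γ (matPi π p) *ᵥ (v - bellmanOp γ π p c v) := by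
  have hinv : discountedResolvent γ (matPi π p) * (1 - γ • matPi π p) = 1 :=
    h.tsum_pow_mul_one_sub
  rw [bellmanOp_eq, Vf_eq_discountedResolvent_mulVec h]
  calc v - discountedResolvent γ (matPi π p) *ᵥ cPi π p c
      = (discountedResolvent γ (matPi π p) * (1 - γ • matPi π p)) *ᵥ v
          - discountedResolvent γ (matPi π p) *ᵥ cPi π p c := by rw [hinv, one_mulVec]
    _ = _ := by
      rw [← mulVec_mulVec, sub_mulVec, one_mulVec, mulVec_sub, mulVec_sub, mulVec_add]
      abel

end MDP

theorem performance_difference_transitions_first_general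
    [Fintype S] [Fintype A] [DecidableEq S]
    (γ : ℝ) (hγ0 : 0 ≤ γ) (hγ1 : γ < 1)
    (c : S → A → S → ℝ)
    (π : S → A → ℝ) (hπ0 : ∀ s a, 0 ≤ π s a) (hπ1 : ∀ s, ∑ a, π s a = 1)
    (p p' : S → A → S → ℝ)
    (hp0 : ∀ s a s', 0 ≤ p s a s') (hp1 : ∀ s a, ∑ s', p s a s' = 1)
    (hp'0 : ∀ s a s', 0 ≤ p' s a s') (hp'1 : ∀ s a, ∑ s', p' s a s' = 1)
    (ρ : S → ℝ) :
    Vrho γ ρ π p c - Vrho γ ρ π p' c =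
      (1 / (1 - γ)) * ∑ s, dvisit γ ρ π p' s * ∑ a, π s a *
        ∑ s', (p s a s' - p' s a s') * (c s a s' + γ * Vf γ π p c s') := by
  have hN :=
    summable_smul_pow_of_mem_rowStochastic hγ0 hγ1 (matPi_mem_rowStochastic hπ0 hπ1 hp0 hp1)
  have hN' :=
    summable_smul_pow_of_mem_rowStochastic hγ0 hγ1 (matPi_mem_rowStochastic hπ0 hπ1 hp'0 hp'1)
  have hγ : 1 - γ ≠ 0 := by linarith
  calc Vrho γ ρ π p c - Vrho γ ρ π p' c = ρ ⬝ᵥ (Vf γ π p c - Vf γ π p' c) :=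
        (dotProduct_sub _ _ _).symm
    _ = (ρ ᵥ* discountedResolvent γ (matPi π p')) ⬝ᵥ
          (bellmanOp γ π p c (Vf γ π p c) - bellmanOp γ π p' c (Vf γ π p c)) := by
      rw [sub_Vf_eq_discountedResolvent_mulVec hN', dotProduct_mulVec, bellmanOp_Vf hN]
    _ = _ := by
      rw [dotProduct, mul_sum]
      refine sum_congr rfl fun s _ => ?_
      simp only [dvisit_eq_vecMul_discountedResolvent hN', Pi.smul_apply, smul_eq_mul,
        Pi.sub_apply, bellmanOp, ← sum_sub_distrib, ← mul_sub, ← sub_mul]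
      field_simp

/-- First performance difference lemma across transition kernels:
`V_{π,p}(ρ) - V_{π,p'}(ρ) = (1/(1-γ)) Σ_s d_ρ^{π,p'}(s) Σ_a π(a|s)
  Σ_{s'} (p(s'|s,a) - p'(s'|s,a)) (c(s,a,s') + γ V_{π,p}(s'))`. -/
theorem performance_difference_transitions_first
    [Fintype S] [Fintype A] [DecidableEq S] [Nonempty S] [Nonempty A]
    (γ : ℝ) (hγ0 : 0 ≤ γ) (hγ1 : γ < 1)
    (c : S → A → S → ℝ)
    (π : S → A → ℝ) (hπ0 : ∀ s a, 0 ≤ π s a) (hπ1 : ∀ s, ∑ a, π s a = 1)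
    (p p' : S → A → S → ℝ)
    (hp0 : ∀ s a s', 0 ≤ p s a s') (hp1 : ∀ s a, ∑ s', p s a s' = 1)
    (hp'0 : ∀ s a s', 0 ≤ p' s a s') (hp'1 : ∀ s a, ∑ s', p' s a s' = 1)
    (ρ : S → ℝ) (hρ0 : ∀ s, 0 ≤ ρ s) (hρ1 : ∑ s, ρ s = 1) :
    Vrho γ ρ π p c - Vrho γ ρ π p' c =
      (1 / (1 - γ)) * ∑ s, dvisit γ ρ π p' s * ∑ a, π s a *
        ∑ s', (p s a s' - p' s a s') * (c s a s' + γ * Vf γ π p c s') :=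
  performance_difference_transitions_first_general γ hγ0 hγ1 c π hπ0 hπ1 p p' hp0 hp1 hp'0 hp'1 ρ
end

section
/- Partial derivative for approximate TMA (direct parametrisation): fix a policy π and an initial distribution ρ. Regard the value V_{π,p}(ρ) = Σ_{s∈S} ρ(s)·((I − γM_{π,p})^{-1} c_{π,p})(s) as a function of the kernel entries (p(s'|s,a))_{(s,a,s') ∈ S×A×S} ∈ ℝ^{S×A×S}; this function is differentiable on the open set where I − γM_{π,p} is invertible, which contains every row-stochastic kernel. At any row-stochastic kernel p, its partial derivative with respect to the entry p(s'|s,a) equals (1/(1−γ))·d_ρ^{π,p}(s)·π(a|s)·(c(s,a,s') + γ·V_{π,p}(s')). -/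
open Finset

variable {S A : Type*}

/-- Expected one-step cost for a kernel given as a function of state–action–next-state
triples: `c_{π,q}(s) = Σ_a π(a|s) Σ_{s'} q(s,a,s') c(s,a,s')`. -/
noncomputable def cPiQ [Fintype S] [Fintype A] (π : S → A → ℝ) (c : S → A → S → ℝ)
    (q : S × A × S → ℝ) (s : S) : ℝ :=
  ∑ a, π s a * ∑ s', q (s, a, s') * c s a s'

/-- Induced state-transition matrix `M_{π,q}(s,s') = Σ_a π(a|s) q(s,a,s')`. -/
noncomputable def matQ [Fintype A] (π : S → A → ℝ) (q : S × A × S → ℝ) :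
    Matrix S S ℝ :=
  Matrix.of fun s s' => ∑ a, π s a * q (s, a, s')

/-- The value `V_{π,q}(ρ)` expressed through the resolvent formula
`Σ_s ρ(s) ((I - γ M_{π,q})⁻¹ c_{π,q})(s)`, as a function of the kernel entries
`q ∈ ℝ^{S×A×S}`. -/
noncomputable def Fval [Fintype S] [Fintype A] [DecidableEq S] (γ : ℝ) (ρ : S → ℝ)
    (π : S → A → ℝ) (c : S → A → S → ℝ) (q : S × A × S → ℝ) : ℝ :=
  ∑ s, ρ s * ((1 - γ • matQ π q)⁻¹.mulVec (cPiQ π c q)) s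

/-- Discounted value function `V_{π,q}(s) = Σ_l γ^l ((M_{π,q})^l c_{π,q})(s)`. -/
noncomputable def VfQ [Fintype S] [Fintype A] [DecidableEq S] (γ : ℝ) (π : S → A → ℝ)
    (c : S → A → S → ℝ) (q : S × A × S → ℝ) (s : S) : ℝ :=
  ∑' l : ℕ, γ ^ l * ((matQ π q ^ l).mulVec (cPiQ π c q)) s

/-- Discounted state visitation distribution
`d_ρ^{π,q}(s) = (1-γ) Σ_l γ^l Σ_{s₀} ρ(s₀) ((M_{π,q})^l)(s₀,s)`. -/
noncomputable def dvisitQ [Fintype S] [Fintype A] [DecidableEq S] (γ : ℝ) (ρ : S → ℝ)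
    (π : S → A → ℝ) (q : S × A × S → ℝ) (s : S) : ℝ :=
  (1 - γ) * ∑' l : ℕ, γ ^ l * ∑ s₀, ρ s₀ * (matQ π q ^ l) s₀ s

/-! Both `M_{π,q}` and `c_{π,q}` are linear in the kernel `q`, so the value is
`ρ ⬝ (I - γ M_{π,q})⁻¹ c_{π,q}`, and the resolvent rule `d(B⁻¹) = -B⁻¹ (dB) B⁻¹` gives its
derivative. Moving the entry `q(s'|s,a)` perturbs `M_{π,q}` by the rank-one matrix
`π(a|s) e_s e_{s'}ᵀ` and `c_{π,q}` by `π(a|s) c(s,a,s') e_s`, so the derivative factors through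
`(ρᵀ (I - γM)⁻¹)(s)` and `((I - γM)⁻¹ c)(s')`. The Neumann series of `(I - γM)⁻¹`, which converges
because a row-stochastic `M` has `∞`-operator norm at most `1`, identifies these with
`d_ρ(s) / (1 - γ)` and `V(s')`. -/

open Matrix

namespace Matrix

variable {n : Type*} [Fintype n] [DecidableEq n]

section LinftyOpNorm

attribute [local instance] Matrix.linftyOpNormedRing Matrix.linftyOpNormedAlgebra

theorem linfty_opNorm_le_one_of_mem_rowStochastic {M : Matrix n n ℝ}
    (hM : M ∈ rowStochastic ℝ n) : ‖M‖ ≤ 1 := by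
  rw [linfty_opNorm_def, NNReal.coe_le_one]
  refine Finset.sup_le fun i _ => ?_
  rw [← NNReal.coe_le_one]
  push_cast
  rw [← sum_row_of_mem_rowStochastic hM i]
  exact (Finset.sum_congr rfl fun j _ => Real.norm_of_nonneg (nonneg_of_mem_rowStochastic hM)).le

theorem norm_smul_lt_one_of_mem_rowStochastic {M : Matrix n n ℝ} (hM : M ∈ rowStochastic ℝ n)
    {γ : ℝ} (hγ0 : 0 ≤ γ) (hγ1 : γ < 1) : ‖γ • M‖ < 1 :=
  calc ‖γ • M‖ ≤ γ * ‖M‖ := by rw [norm_smul, Real.norm_of_nonneg hγ0]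
    _ ≤ γ * 1 := by gcongr; exact linfty_opNorm_le_one_of_mem_rowStochastic hM
    _ < 1 := by linarith

theorem isUnit_one_sub_smul_of_mem_rowStochastic {M : Matrix n n ℝ}
    (hM : M ∈ rowStochastic ℝ n) {γ : ℝ} (hγ0 : 0 ≤ γ) (hγ1 : γ < 1) : IsUnit (1 - γ • M) :=
  isUnit_one_sub_of_norm_lt_one (norm_smul_lt_one_of_mem_rowStochastic hM hγ0 hγ1)

theorem hasSum_pow_apply_of_mem_rowStochastic {M : Matrix n n ℝ}
    (hM : M ∈ rowStochastic ℝ n) {γ : ℝ} (hγ0 : 0 ≤ γ) (hγ1 : γ < 1) (i j : n) :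
    HasSum (fun l : ℕ => γ ^ l * (M ^ l) i j) (Ring.inverse (1 - γ • M) i j) := by
  have h := hasSum_geom_series_inverse _ (norm_smul_lt_one_of_mem_rowStochastic hM hγ0 hγ1)
  simpa only [smul_pow, smul_apply, smul_eq_mul] using Pi.hasSum.1 (Pi.hasSum.1 h i) j

theorem hasDerivAt_dotProduct_inverse_mulVec {B : ℝ → Matrix n n ℝ} {B' : Matrix n n ℝ}
    {v : ℝ → n → ℝ} {v' : n → ℝ} {t : ℝ} (x : n → ℝ) (hB : HasDerivAt B B' t)
    (hv : HasDerivAt v v' t) (hBt : IsUnit (B t)) :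
    HasDerivAt (fun t => x ⬝ᵥ (Ring.inverse (B t) *ᵥ v t))
      (x ⬝ᵥ (Ring.inverse (B t) *ᵥ v' - (Ring.inverse (B t) * B' * Ring.inverse (B t)) *ᵥ v t))
      t := by
  have hR : HasDerivAt (fun t => Ring.inverse (B t))
      (-(Ring.inverse (B t) * B' * Ring.inverse (B t))) t := by
    obtain ⟨u, hu⟩ := hBt
    have h := hasFDerivAt_ringInverse (𝕜 := ℝ) u
    rw [hu] at h
    rw [← hu, Ring.inverse_unit]
    exact h.comp_hasDerivAt t hB
  have hRij : ∀ i j, HasDerivAt (fun t => Ring.inverse (B t) i j)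
      (-(Ring.inverse (B t) * B' * Ring.inverse (B t)) i j) t :=
    fun i j => hasDerivAt_pi.1 (hasDerivAt_pi.1 hR i) j
  refine (HasDerivAt.fun_sum fun i _ => (HasDerivAt.fun_sum fun j _ =>
    (hRij i j).mul (hasDerivAt_pi.1 hv j)).const_mul (x i)).congr_deriv ?_
  simp only [dotProduct, mulVec, Pi.sub_apply, neg_mul, neg_add_eq_sub, mul_sub,
    Finset.sum_sub_distrib]

theorem differentiableAt_dotProduct_inverse_mulVec {E : Type*} [NormedAddCommGroup E]
    [NormedSpace ℝ E] {B : E → Matrix n n ℝ} {v : E → n → ℝ} {q : E} (x : n → ℝ)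
    (hB : ∀ i j, DifferentiableAt ℝ (fun q => B q i j) q) (hv : DifferentiableAt ℝ v q)
    (hBq : IsUnit (B q)) :
    DifferentiableAt ℝ (fun q => x ⬝ᵥ (Ring.inverse (B q) *ᵥ v q)) q := by
  have hR : DifferentiableAt ℝ (fun q => Ring.inverse (B q)) q :=
    (differentiableAt_inverse hBq).comp q
      (differentiableAt_pi.2 fun i => differentiableAt_pi.2 (hB i))
  have hRij : ∀ i j, DifferentiableAt ℝ (fun q => Ring.inverse (B q) i j) q :=
    fun i j => differentiableAt_pi.1 (differentiableAt_pi.1 hR i) j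
  exact DifferentiableAt.fun_sum fun i _ => (DifferentiableAt.fun_sum fun j _ =>
    (hRij i j).mul (differentiableAt_pi.1 hv j)).const_mul (x i)

end LinftyOpNorm

theorem hasSum_vecMul_pow_of_mem_rowStochastic {M : Matrix n n ℝ}
    (hM : M ∈ rowStochastic ℝ n) {γ : ℝ} (hγ0 : 0 ≤ γ) (hγ1 : γ < 1) (x : n → ℝ) (j : n) :
    HasSum (fun l : ℕ => γ ^ l * ∑ i, x i * (M ^ l) i j)
      ((x ᵥ* Ring.inverse (1 - γ • M)) j) := by
  simp only [Finset.mul_sum, mul_left_comm _ (x _)]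
  exact hasSum_sum fun i _ => (hasSum_pow_apply_of_mem_rowStochastic hM hγ0 hγ1 i j).mul_left _

theorem hasSum_pow_mulVec_of_mem_rowStochastic {M : Matrix n n ℝ}
    (hM : M ∈ rowStochastic ℝ n) {γ : ℝ} (hγ0 : 0 ≤ γ) (hγ1 : γ < 1) (v : n → ℝ) (i : n) :
    HasSum (fun l : ℕ => γ ^ l * (M ^ l *ᵥ v) i) ((Ring.inverse (1 - γ • M) *ᵥ v) i) := by
  simp only [mulVec, dotProduct, Finset.mul_sum, ← mul_assoc]
  exact hasSum_sum fun j _ => (hasSum_pow_apply_of_mem_rowStochastic hM hγ0 hγ1 i j).mul_right _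

theorem dotProduct_mul_single_mul_mulVec {α : Type*} [CommSemiring α] (x v : n → α)
    (P Q : Matrix n n α) (i j : n) (a : α) :
    x ⬝ᵥ ((P * single i j a * Q) *ᵥ v) = (x ᵥ* P) i * a * (Q *ᵥ v) j := by
  rw [← mulVec_mulVec, ← mulVec_mulVec, dotProduct_mulVec, single_mulVec_eq, dotProduct_smul,
    dotProduct_single_one, smul_eq_mul]
  ring

end Matrix

section MarkovDecisionProcess

variable [Fintype A]

theorem matQ_single [DecidableEq S] [DecidableEq A] (π : S → A → ℝ) (s : S) (a : A) (s' : S) :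
    matQ π (Pi.single (s, a, s') 1) = single s s' (π s a) := by
  ext s₀ s₁
  by_cases h₀ : s₀ = s <;> by_cases h₁ : s₁ = s' <;>
    simp [matQ, Pi.single_apply, h₀, h₁, Ne.symm]

variable [Fintype S]

theorem differentiableAt_matQ_apply (π : S → A → ℝ) (q : S × A × S → ℝ) (s s' : S) :
    DifferentiableAt ℝ (fun q => matQ π q s s') q := by
  simp only [matQ, of_apply]
  exact DifferentiableAt.fun_sum fun a _ =>
    (differentiableAt_pi.1 differentiableAt_id (s, a, s')).const_mul (π s a)

theorem differentiableAt_cPiQ (π : S → A → ℝ) (c : S → A → S → ℝ) (q : S × A × S → ℝ) :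
    DifferentiableAt ℝ (cPiQ π c) q :=
  differentiableAt_pi.2 fun s => DifferentiableAt.fun_sum fun a _ =>
    (DifferentiableAt.fun_sum fun s' _ =>
      (differentiableAt_pi.1 differentiableAt_id (s, a, s')).mul_const (c s a s')).const_mul (π s a)

variable [DecidableEq S]

theorem differentiableAt_one_sub_smul_matQ_apply (γ : ℝ) (π : S → A → ℝ)
    (q : S × A × S → ℝ) (s s' : S) :
    DifferentiableAt ℝ (fun q => (1 - γ • matQ π q) s s') q :=
  (differentiableAt_const _).sub ((differentiableAt_matQ_apply π q s s').const_mul γ)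

theorem matQ_mem_rowStochastic {π : S → A → ℝ} {p : S × A × S → ℝ} (hπ0 : ∀ s a, 0 ≤ π s a)
    (hπ1 : ∀ s, ∑ a, π s a = 1) (hp0 : ∀ i, 0 ≤ p i) (hp1 : ∀ s a, ∑ s', p (s, a, s') = 1) :
    matQ π p ∈ rowStochastic ℝ S := by
  refine mem_rowStochastic_iff_sum.2 ⟨fun s s' => ?_, fun s => ?_⟩
  · exact Finset.sum_nonneg fun a _ => mul_nonneg (hπ0 s a) (hp0 _)
  · simp only [matQ, of_apply]
    rw [Finset.sum_comm]
    simp only [← Finset.mul_sum, hp1, mul_one, hπ1]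

theorem Fval_eq_dotProduct (γ : ℝ) (ρ : S → ℝ) (π : S → A → ℝ) (c : S → A → S → ℝ)
    (q : S × A × S → ℝ) :
    Fval γ ρ π c q = ρ ⬝ᵥ (Ring.inverse (1 - γ • matQ π q) *ᵥ cPiQ π c q) := by
  rw [Fval, nonsing_inv_eq_ringInverse]
  rfl

theorem VfQ_eq_inverse_mulVec {γ : ℝ} (hγ0 : 0 ≤ γ) (hγ1 : γ < 1) {π : S → A → ℝ}
    (c : S → A → S → ℝ) {p : S × A × S → ℝ} (hM : matQ π p ∈ rowStochastic ℝ S) :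
    VfQ γ π c p = Ring.inverse (1 - γ • matQ π p) *ᵥ cPiQ π c p :=
  funext fun s => (hasSum_pow_mulVec_of_mem_rowStochastic hM hγ0 hγ1 _ s).tsum_eq

theorem dvisitQ_eq_smul_vecMul_inverse {γ : ℝ} (hγ0 : 0 ≤ γ) (hγ1 : γ < 1) (ρ : S → ℝ)
    {π : S → A → ℝ} {p : S × A × S → ℝ} (hM : matQ π p ∈ rowStochastic ℝ S) :
    dvisitQ γ ρ π p = (1 - γ) • (ρ ᵥ* Ring.inverse (1 - γ • matQ π p)) :=
  funext fun s => by
    rw [dvisitQ, (hasSum_vecMul_pow_of_mem_rowStochastic hM hγ0 hγ1 ρ s).tsum_eq]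
    rfl

variable [DecidableEq A]

theorem hasDerivAt_one_sub_smul_matQ_update (γ : ℝ) (π : S → A → ℝ) (p : S × A × S → ℝ)
    (i : S × A × S) (t : ℝ) :
    HasDerivAt (fun t => 1 - γ • matQ π (Function.update p i t))
      (-(γ • matQ π (Pi.single i 1))) t :=
  hasDerivAt_pi.2 fun s => hasDerivAt_pi.2 fun s' => ((HasDerivAt.fun_sum fun a _ =>
    (hasDerivAt_pi.1 (hasDerivAt_update p i t) (s, a, s')).const_mul (π s a)).const_mul
      γ).const_sub ((1 : Matrix S S ℝ) s s')

theorem hasDerivAt_cPiQ_update (π : S → A → ℝ) (c : S → A → S → ℝ) (p : S × A × S → ℝ)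
    (i : S × A × S) (t : ℝ) :
    HasDerivAt (fun t => cPiQ π c (Function.update p i t)) (cPiQ π c (Pi.single i 1)) t :=
  hasDerivAt_pi.2 fun s => HasDerivAt.fun_sum fun a _ => (HasDerivAt.fun_sum fun s' _ =>
    (hasDerivAt_pi.1 (hasDerivAt_update p i t) (s, a, s')).mul_const (c s a s')).const_mul (π s a)

theorem cPiQ_single (π : S → A → ℝ) (c : S → A → S → ℝ) (s : S) (a : A) (s' : S) :
    cPiQ π c (Pi.single (s, a, s') 1) = Pi.single s (π s a * c s a s') := by
  ext s₀
  by_cases h₀ : s₀ = s <;> simp [cPiQ, Pi.single_apply, h₀, ite_and]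

end MarkovDecisionProcess

theorem partial_derivative_approximate_tma_general
    [Fintype S] [Fintype A] [DecidableEq S] [DecidableEq A]
    (γ : ℝ) (hγ0 : 0 ≤ γ) (hγ1 : γ < 1)
    (ρ : S → ℝ)
    (c : S → A → S → ℝ)
    (π : S → A → ℝ) (hπ0 : ∀ s a, 0 ≤ π s a) (hπ1 : ∀ s, ∑ a, π s a = 1)
    (p : S × A × S → ℝ) (hp0 : ∀ i, 0 ≤ p i)
    (hp1 : ∀ s a, ∑ s', p (s, a, s') = 1) :
    (∀ q : S × A × S → ℝ, IsUnit (1 - γ • matQ π q) →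
      DifferentiableAt ℝ (Fval γ ρ π c) q) ∧
    IsUnit (1 - γ • matQ π p) ∧
    ∀ s a s', HasDerivAt
      (fun t : ℝ => Fval γ ρ π c (Function.update p (s, a, s') t))
      ((1 / (1 - γ)) * dvisitQ γ ρ π p s * π s a *
        (c s a s' + γ * VfQ γ π c p s'))
      (p (s, a, s')) := by
  have hM := matQ_mem_rowStochastic hπ0 hπ1 hp0 hp1
  have hunit := isUnit_one_sub_smul_of_mem_rowStochastic hM hγ0 hγ1
  refine ⟨fun q hq => ?_, hunit, fun s a s' => ?_⟩
  · rw [funext (Fval_eq_dotProduct γ ρ π c)]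
    exact differentiableAt_dotProduct_inverse_mulVec ρ
      (differentiableAt_one_sub_smul_matQ_apply γ π q) (differentiableAt_cPiQ π c q) hq
  · have hB := hasDerivAt_one_sub_smul_matQ_update γ π p (s, a, s') (p (s, a, s'))
    rw [matQ_single, smul_single, single_neg, smul_eq_mul] at hB
    have h := hasDerivAt_dotProduct_inverse_mulVec ρ hB
      (hasDerivAt_cPiQ_update π c p (s, a, s') (p (s, a, s'))) (by rwa [Function.update_eq_self])
    simp only [Function.update_eq_self, cPiQ_single] at h
    simp only [Fval_eq_dotProduct]
    convert h using 1
    rw [dvisitQ_eq_smul_vecMul_inverse hγ0 hγ1 ρ hM, VfQ_eq_inverse_mulVec hγ0 hγ1 c hM,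
      dotProduct_sub, dotProduct_mul_single_mul_mulVec, dotProduct_mulVec, dotProduct_single,
      Pi.smul_apply, smul_eq_mul]
    field_simp [(by linarith : (1 : ℝ) - γ ≠ 0)]
    ring

/-- Partial derivative for approximate TMA under the direct parametrisation: the value
`q ↦ V_{π,q}(ρ)` (resolvent formula) is differentiable wherever `I - γ M_{π,q}` is
invertible; this open set contains every row-stochastic kernel `p`, and at such a `p` the
partial derivative with respect to the entry `p(s'|s,a)` equals
`(1/(1-γ)) d_ρ^{π,p}(s) π(a|s) (c(s,a,s') + γ V_{π,p}(s'))`. -/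
theorem partial_derivative_approximate_tma
    [Fintype S] [Fintype A] [DecidableEq S] [DecidableEq A] [Nonempty S] [Nonempty A]
    (γ : ℝ) (hγ0 : 0 ≤ γ) (hγ1 : γ < 1)
    (ρ : S → ℝ) (hρ0 : ∀ s, 0 ≤ ρ s) (hρ1 : ∑ s, ρ s = 1)
    (c : S → A → S → ℝ)
    (π : S → A → ℝ) (hπ0 : ∀ s a, 0 ≤ π s a) (hπ1 : ∀ s, ∑ a, π s a = 1)
    (p : S × A × S → ℝ) (hp0 : ∀ i, 0 ≤ p i)
    (hp1 : ∀ s a, ∑ s', p (s, a, s') = 1) :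
    (∀ q : S × A × S → ℝ, IsUnit (1 - γ • matQ π q) →
      DifferentiableAt ℝ (Fval γ ρ π c) q) ∧
    IsUnit (1 - γ • matQ π p) ∧
    ∀ s a s', HasDerivAt
      (fun t : ℝ => Fval γ ρ π c (Function.update p (s, a, s') t))
      ((1 / (1 - γ)) * dvisitQ γ ρ π p s * π s a *
        (c s a s' + γ * VfQ γ π c p s'))
      (p (s, a, s')) :=
  partial_derivative_approximate_tma_general γ hγ0 hγ1 ρ c π hπ0 hπ1 p hp0 hp1
end

section
/- Pushback property of the mirror step: let E be a finite-dimensional real inner product space, D ⊆ E a convex set, h : E → ℝ convex and differentiable, and define the Bregman divergence B(x,y;h) := h(x) − h(y) − ⟨∇h(y), x − y⟩. Let f : E → ℝ be convex and differentiable, let α > 0 and y ∈ D, and suppose x* ∈ D satisfies f(x*) + α·B(x*,y;h) ≤ f(x) + α·B(x,y;h) for all x ∈ D (x* minimizes the mirror-descent objective over D). Then for every z ∈ D, f(x*) + α·B(x*,y;h) ≤ f(z) + α·(B(z,y;h) − B(z,x*;h)). -/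
/-!
The objective `f + α B(·, y)` is minimized over the convex set `D` at `x*`, so its derivative
`⟪∇f x* + α (∇h x* - ∇h y), ·⟫` is nonnegative in every direction `z - x*` into `D`. Convexity of
`f` gives `f x* + ⟪∇f x*, z - x*⟫ ≤ f z`, and the three-point identity
`B(z, y) - B(z, x*) = B(x*, y) + ⟪∇h x* - ∇h y, z - x*⟫` turns the sum of these two inequalities
into the claim.
-/

open InnerProductSpace

section FirstOrder

variable {E : Type*} [NormedAddCommGroup E] [NormedSpace ℝ E] {s : Set E} {f : E → ℝ}
  {f' : StrongDual ℝ E} {x y : E}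

theorem ConvexOn.add_apply_sub_le_of_hasFDerivAt (hf : ConvexOn ℝ s f) (hx : x ∈ s) (hy : y ∈ s)
    (hf' : HasFDerivAt f f' x) : f x + f' (y - x) ≤ f y := by
  let g : ℝ → ℝ := f ∘ AffineMap.lineMap x y
  have hg : ConvexOn ℝ (Set.Icc 0 1) g :=
    (hf.comp_affineMap _).subset (fun t ht ↦ hf.1.lineMap_mem hx hy ht) (convex_Icc 0 1)
  have hg' : HasDerivAt g (f' (y - x)) 0 := by
    have hf'₀ : HasFDerivAt f f' (AffineMap.lineMap x y (0 : ℝ)) := by simpa using hf'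
    exact hf'₀.comp_hasDerivAt 0 AffineMap.hasDerivAt_lineMap
  have hslope : slope g 0 1 = f y - f x := by simp [g, slope]
  have := hg.le_slope_of_hasDerivAt (by simp) (by simp) zero_lt_one hg'
  rw [hslope] at this
  linarith

theorem IsMinOn.apply_sub_nonneg_of_hasFDerivAt (hmin : IsMinOn f s x) (hs : Convex ℝ s)
    (hx : x ∈ s) (hy : y ∈ s) (hf' : HasFDerivAt f f' x) : 0 ≤ f' (y - x) :=
  hmin.localize.hasFDerivWithinAt_nonneg hf'.hasFDerivWithinAt
    (sub_mem_posTangentConeAt_of_segment_subset (hs.segment_subset hx hy))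

end FirstOrder

section Bregman

variable {E : Type*} [NormedAddCommGroup E] [InnerProductSpace ℝ E] [CompleteSpace E]

noncomputable def bregman (h : E → ℝ) (x y : E) : ℝ :=
  h x - h y - ⟪gradient h y, x - y⟫_ℝ

theorem bregman_sub_bregman (h : E → ℝ) (x y z : E) :
    bregman h z y - bregman h z x = bregman h x y + ⟪gradient h x - gradient h y, z - x⟫_ℝ := by
  simp only [bregman, inner_sub_left, inner_sub_right]
  ring

theorem hasFDerivAt_bregman_left {h : E → ℝ} {x : E} (hh : DifferentiableAt ℝ h x) (y : E) :
    HasFDerivAt (bregman h · y) (toDual ℝ E (gradient h x - gradient h y)) x := by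
  have hfun : (bregman h · y) = fun w ↦
      h w - h y - (toDual ℝ E (gradient h y) w - toDual ℝ E (gradient h y) y) := by
    funext w
    simp only [bregman, toDual_apply_apply, inner_sub_right]
  rw [hfun, map_sub]
  exact (hh.hasGradientAt.hasFDerivAt.sub_const (h y)).sub
    ((toDual ℝ E (gradient h y)).hasFDerivAt.sub_const _)

end Bregman

theorem pushback_property_general
    {E : Type*} [NormedAddCommGroup E] [InnerProductSpace ℝ E] [FiniteDimensional ℝ E]
    (D : Set E) (hD : Convex ℝ D)
    (h : E → ℝ) (hdiff : Differentiable ℝ h)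
    (B : E → E → ℝ)
    (hB : ∀ x y : E, B x y = h x - h y - (inner ℝ (gradient h y) (x - y) : ℝ))
    (f : E → ℝ) (fconv : ConvexOn ℝ Set.univ f) (fdiff : Differentiable ℝ f)
    (α : ℝ) (y : E)
    (xstar : E) (hxstar : xstar ∈ D)
    (hmin : ∀ x ∈ D, f xstar + α * B xstar y ≤ f x + α * B x y) :
    ∀ z ∈ D, f xstar + α * B xstar y ≤ f z + α * (B z y - B z xstar) := by
  intro z hz
  obtain rfl : B = bregman h := funext₂ hB
  have hf' := (fdiff xstar).hasGradientAt.hasFDerivAt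
  have hobj' := hf'.add ((hasFDerivAt_bregman_left (hdiff xstar) y).const_mul α)
  have hopt := (isMinOn_iff.mpr hmin).apply_sub_nonneg_of_hasFDerivAt hD hxstar hz hobj'
  have hsupport := fconv.add_apply_sub_le_of_hasFDerivAt (Set.mem_univ _) (Set.mem_univ z) hf'
  simp only [add_apply, smul_apply, toDual_apply_apply, smul_eq_mul] at hopt hsupport
  rw [bregman_sub_bregman, mul_add]
  linarith

/-- Pushback (three-point) property of the mirror step: in a finite-dimensional real inner
product space, if `h` and `f` are convex and differentiable, `B(x,y) = h x - h y - ⟪∇h y, x-y⟫`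
is the Bregman divergence generated by `h`, and `x*` minimizes `f + α B(·, y)` over a convex
set `D ∋ y`, then for every `z ∈ D`,
`f x* + α B(x*,y) ≤ f z + α (B(z,y) - B(z,x*))`. -/
theorem pushback_property
    {E : Type*} [NormedAddCommGroup E] [InnerProductSpace ℝ E] [FiniteDimensional ℝ E]
    (D : Set E) (hD : Convex ℝ D)
    (h : E → ℝ) (hconv : ConvexOn ℝ Set.univ h) (hdiff : Differentiable ℝ h)
    (B : E → E → ℝ)
    (hB : ∀ x y : E, B x y = h x - h y - (inner ℝ (gradient h y) (x - y) : ℝ))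
    (f : E → ℝ) (fconv : ConvexOn ℝ Set.univ f) (fdiff : Differentiable ℝ f)
    (α : ℝ) (hα : 0 < α) (y : E) (hy : y ∈ D)
    (xstar : E) (hxstar : xstar ∈ D)
    (hmin : ∀ x ∈ D, f xstar + α * B xstar y ≤ f x + α * B x y) :
    ∀ z ∈ D, f xstar + α * B xstar y ≤ f z + α * (B z y - B z xstar) :=
  pushback_property_general D hD h hdiff B hB f fconv fdiff α y xstar hxstar hmin
end
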